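/- arXiv:2011.02687 — 2 statements merged into one kernel-verified Lean document; each statement's English description precedes it below -/
import Mathlib

section
/- There exist probability distributions p_s and p_e on indices {1,...,l} such that for all i, the product F(i)·G(i) equals the soft-label p_soft(i), where F(i) = Σ_{j≤i} p_s(j), G(i) = Σ_{j≥i} p_e(j), and p_soft(i) = 1 if s_a ≤ i ≤ e_a, q^{s_a - i} if s_w ≤ i < s_a, q^{i - e_a} if e_a < i ≤ e_w, and 0 otherwise. -/
theorem block_attention_represents_soft_label
    (l sw sa ea ew : ℕ) (q : ℝ)
    (hsw : 1 ≤ sw) (h1 : sw ≤ sa) (h2 : sa ≤ ea) (h3 : ea ≤ ew) (h4 : ew ≤ l)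
    (hq0 : 0 < q) (hq1 : q ≤ 1)
    (psoft : ℕ → ℝ)
    (hpsoft : ∀ i, psoft i =
      if sa ≤ i ∧ i ≤ ea then 1
      else if sw ≤ i ∧ i < sa then q ^ (sa - i)
      else if ea < i ∧ i ≤ ew then q ^ (i - ea)
      else 0) :
    ∃ ps pe : ℕ → ℝ,
      (∀ i ∈ Finset.Icc 1 l, 0 ≤ ps i) ∧
      (∑ j ∈ Finset.Icc 1 l, ps j) = 1 ∧
      (∀ i ∈ Finset.Icc 1 l, 0 ≤ pe i) ∧
      (∑ j ∈ Finset.Icc 1 l, pe j) = 1 ∧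
      (∀ i ∈ Finset.Icc 1 l,
        (∑ j ∈ Finset.Icc 1 i, ps j) * (∑ j ∈ Finset.Icc i l, pe j) = psoft i) := by
  classical
  set F : ℕ → ℝ := fun i => if i < sw then 0 else if i < sa then q ^ (sa - i) else 1 with hF
  set G : ℕ → ℝ := fun i => if i ≤ ea then 1 else if i ≤ ew then q ^ (i - ea) else 0 with hG
  have hF0 : F 0 = 0 := by simp only [hF]; rw [if_pos]; omega
  have hFnn : ∀ i, 0 ≤ F i := by
    intro i; simp only [hF]; split_ifs <;> positivity
  have hF1 : ∀ i, F i ≤ 1 := by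
    intro i; simp only [hF]; split_ifs <;> first
      | exact le_refl _ | exact pow_le_one₀ hq0.le hq1 | norm_num
  have hGnn : ∀ i, 0 ≤ G i := by
    intro i; simp only [hG]; split_ifs <;> positivity
  have hG1 : ∀ i, G i ≤ 1 := by
    intro i; simp only [hG]; split_ifs <;> first
      | exact le_refl _ | exact pow_le_one₀ hq0.le hq1 | norm_num
  have hFmono : ∀ i, F i ≤ F (i + 1) := by
    intro i; simp only [hF]
    split_ifs <;> first
      | exact le_refl _
      | exact pow_le_pow_of_le_one hq0.le hq1 (by omega)
      | exact pow_le_one₀ hq0.le hq1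
      | positivity
      | (exfalso; omega)
  have hGmono : ∀ i, G (i + 1) ≤ G i := by
    intro i; simp only [hG]
    split_ifs <;> first
      | exact le_refl _
      | exact pow_le_pow_of_le_one hq0.le hq1 (by omega)
      | exact pow_le_one₀ hq0.le hq1
      | positivity
      | (exfalso; omega)
  set ps : ℕ → ℝ := fun i => F i - F (i - 1) with hps
  set pe : ℕ → ℝ := fun i => G i - G (i + 1) with hpe
  have hpsum : ∀ i, ∑ j ∈ Finset.Icc 1 i, ps j = F i := by
    intro i
    induction i with
    | zero => simp [hF0]
    | succ n ih =>
      rw [Finset.sum_Icc_succ_top (by omega), ih]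
      simp only [hps, Nat.add_sub_cancel]
      ring
  have hpesum : ∀ i n, ∑ j ∈ Finset.Icc i (i + n), pe j = G i - G (i + n + 1) := by
    intro i n
    induction n with
    | zero => simp [hpe]
    | succ n ih =>
      have : i + (n + 1) = (i + n) + 1 := by omega
      rw [this, Finset.sum_Icc_succ_top (by omega), ih]
      simp only [hpe]
      ring
  have hl1 : 1 ≤ l := by omega
  have hGl1 : G (l + 1) = 0 := by
    simp only [hG]; rw [if_neg (by omega), if_neg (by omega)]
  have hpesum' : ∀ i, i ≤ l → ∑ j ∈ Finset.Icc i l, pe j = G i := by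
    intro i hi
    have : l = i + (l - i) := by omega
    rw [this, hpesum, ← this, hGl1, sub_zero]
  refine ⟨ps, pe, ?_, ?_, ?_, ?_, ?_⟩
  · intro i hi
    simp only [Finset.mem_Icc] at hi
    have := hFmono (i - 1)
    have h : i - 1 + 1 = i := by omega
    rw [h] at this
    simp only [hps]; linarith
  · rw [hpsum]
    simp only [hF]; rw [if_neg (by omega), if_neg (by omega)]
  · intro i hi
    have := hGmono i
    simp only [hpe]; linarith
  · rw [hpesum' 1 hl1]
    simp only [hG]; rw [if_pos (by omega)]
  · intro i hi
    simp only [Finset.mem_Icc] at hi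
    rw [hpsum, hpesum' i hi.2, hpsoft]
    split_ifs with a b c
    · simp only [hF, hG]
      rw [if_neg (by omega), if_neg (by omega), if_pos (by omega)]
      norm_num
    · simp only [hF, hG]
      rw [if_neg (by omega), if_pos (by omega), if_pos (by omega)]
      ring
    · simp only [hF, hG]
      rw [if_neg (by omega), if_neg (by omega), if_neg (by omega), if_pos (by omega)]
      ring
    · -- i < sw or i > ew
      simp only [hF, hG]
      rcases (by omega : i < sw ∨ ew < i) with h | h
      · rw [if_pos h]; ring
      · rw [if_neg (by omega : ¬ i < sw), if_neg (by omega : ¬ i < sa),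
          if_neg (by omega : ¬ i ≤ ea), if_neg (by omega : ¬ i ≤ ew)]; ring
end

section
/- For any finite collection of m disjoint ordered intervals B_1 = [s_1,e_1], ..., B_m = [s_m,e_m] in {1,...,l} with e_j < s_{j+1} for all j, and reals 0 < ε < a, there exist probability distributions p_s, p_e on {1,...,l} and a scaling constant k = ε·(a/ε)^m such that for every index i, k · F(i) · G(i) equals a if i lies in some B_j, and equals ε otherwise, where F(i) = Σ_{j≤i} p_s(j) and G(i) = Σ_{j≥i} p_e(j). -/
open scoped Classical

lemma tele_up (f : ℕ → ℝ) (n : ℕ) :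
    ∑ j ∈ Finset.Icc 1 n, (f j - f (j - 1)) = f n - f 0 := by
  induction n with
  | zero => simp
  | succ n ih =>
    rw [Finset.sum_Icc_succ_top (by omega), ih]
    simp only [Nat.add_sub_cancel]
    ring

lemma tele_down (f : ℕ → ℝ) (a b : ℕ) (h : a ≤ b + 1) :
    ∑ j ∈ Finset.Icc a b, (f j - f (j + 1)) = f a - f (b + 1) := by
  induction b with
  | zero => interval_cases a <;> simp
  | succ b ih =>
    rcases Nat.lt_or_ge a (b + 2) with h' | h'
    · have h2 : a ≤ b + 1 := by omega
      rw [Finset.sum_Icc_succ_top h2, ih h2]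
      ring
    · rw [Finset.Icc_eq_empty (by omega)]
      have : a = b + 2 := by omega
      subst this
      simp

theorem block_attention_multiple_spans
    (l m : ℕ) (hl : 1 ≤ l) (hm : 1 ≤ m)
    (s e : ℕ → ℕ)
    (hs : ∀ j ∈ Finset.Icc 1 m, 1 ≤ s j)
    (hse : ∀ j ∈ Finset.Icc 1 m, s j ≤ e j)
    (he : ∀ j ∈ Finset.Icc 1 m, e j ≤ l)
    (hdisj : ∀ j, 1 ≤ j → j < m → e j < s (j + 1))
    (a ε : ℝ) (hε : 0 < ε) (hεa : ε < a) :
    ∃ ps pe : ℕ → ℝ,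
      (∀ i ∈ Finset.Icc 1 l, 0 ≤ ps i) ∧
      (∑ j ∈ Finset.Icc 1 l, ps j) = 1 ∧
      (∀ i ∈ Finset.Icc 1 l, 0 ≤ pe i) ∧
      (∑ j ∈ Finset.Icc 1 l, pe j) = 1 ∧
      (∀ i ∈ Finset.Icc 1 l,
        (ε * (a / ε) ^ m) *
          ((∑ j ∈ Finset.Icc 1 i, ps j) * (∑ j ∈ Finset.Icc i l, pe j)) =
        if ∃ j ∈ Finset.Icc 1 m, s j ≤ i ∧ i ≤ e j then a else ε) := by
  have ha : (0:ℝ) < a := lt_trans hε hεa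
  set r : ℝ := ε / a with hrdef
  have hr0 : 0 < r := div_pos hε ha
  have hr1 : r ≤ 1 := le_of_lt ((div_lt_one ha).mpr hεa)
  set A : ℕ → ℕ := fun i => ((Finset.Icc 1 m).filter (fun j => s j ≤ i)).card with hAdef
  set B : ℕ → ℕ := fun i => ((Finset.Icc 1 m).filter (fun j => e j < i)).card with hBdef
  have hAmono : ∀ i i', i ≤ i' → A i ≤ A i' := by
    intro i i' hii
    apply Finset.card_le_card
    intro j hj
    simp only [Finset.mem_filter] at hj ⊢
    exact ⟨hj.1, le_trans hj.2 hii⟩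
  have hBmono : ∀ i i', i ≤ i' → B i ≤ B i' := by
    intro i i' hii
    apply Finset.card_le_card
    intro j hj
    simp only [Finset.mem_filter] at hj ⊢
    exact ⟨hj.1, lt_of_lt_of_le hj.2 hii⟩
  have hAle : ∀ i, A i ≤ m := by
    intro i
    calc A i ≤ (Finset.Icc 1 m).card := Finset.card_le_card (Finset.filter_subset _ _)
    _ = m := by simp
  have hAl : A l = m := by
    have h : (Finset.Icc 1 m).filter (fun j => s j ≤ l) = Finset.Icc 1 m :=
      Finset.filter_true_of_mem (fun j hj => le_trans (hse j hj) (he j hj))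
    simp only [hAdef]
    rw [h]
    simp
  have hB1 : B 1 = 0 := by
    have h : (Finset.Icc 1 m).filter (fun j => e j < 1) = ∅ := by
      apply Finset.filter_false_of_mem
      intro j hj
      have := le_trans (hs j hj) (hse j hj)
      omega
    simp only [hBdef]
    rw [h]
    simp
  have key : ∀ j j', 1 ≤ j → j < j' → j' ≤ m → e j < s j' := by
    intro j j' h1 h2 h3
    induction j' with
    | zero => omega
    | succ n ih =>
      rcases Nat.lt_or_ge j n with hn | hn
      · have h4 : e j < s n := ih (by omega) (by omega)
        have h5 : s n ≤ e n := hse n (by simp [Finset.mem_Icc]; omega)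
        have h6 : e n < s (n + 1) := hdisj n (by omega) (by omega)
        omega
      · have : j = n := by omega
        subst this
        exact hdisj j h1 (by omega)
  have hcount1 : ∀ i, (∃ j ∈ Finset.Icc 1 m, s j ≤ i ∧ i ≤ e j) → A i = B i + 1 := by
    intro i ⟨j0, hj0m, hj0s, hj0e⟩
    have hj0m' := Finset.mem_Icc.mp hj0m
    have hset : (Finset.Icc 1 m).filter (fun j => s j ≤ i)
        = insert j0 ((Finset.Icc 1 m).filter (fun j => e j < i)) := by
      ext j
      simp only [Finset.mem_filter, Finset.mem_insert, Finset.mem_Icc]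
      constructor
      · rintro ⟨hj, hsj⟩
        by_cases hej : e j < i
        · exact Or.inr ⟨hj, hej⟩
        · left
          push_neg at hej
          by_contra hne
          rcases Nat.lt_or_ge j j0 with hlt | hge
          · have := key j j0 (by omega) hlt (by omega)
            omega
          · have hlt : j0 < j := by omega
            have := key j0 j (by omega) hlt (by omega)
            omega
      · rintro (rfl | ⟨hj, hej⟩)
        · exact ⟨hj0m', hj0s⟩
        · exact ⟨hj, le_trans (hse j (Finset.mem_Icc.mpr hj)) (le_of_lt hej)⟩
    have hj0notin : j0 ∉ (Finset.Icc 1 m).filter (fun j => e j < i) := by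
      simp only [Finset.mem_filter]
      rintro ⟨_, h⟩
      omega
    simp only [hAdef, hBdef]
    rw [hset, Finset.card_insert_of_notMem hj0notin]
  have hcount2 : ∀ i, (¬∃ j ∈ Finset.Icc 1 m, s j ≤ i ∧ i ≤ e j) → A i = B i := by
    intro i hno
    push_neg at hno
    have hset : (Finset.Icc 1 m).filter (fun j => s j ≤ i)
        = (Finset.Icc 1 m).filter (fun j => e j < i) := by
      ext j
      simp only [Finset.mem_filter]
      constructor
      · rintro ⟨hj, hsj⟩
        refine ⟨hj, ?_⟩
        have := hno j hj
        by_contra h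
        push_neg at h
        exact ((this hsj).not_ge h).elim
      · rintro ⟨hj, hej⟩
        exact ⟨hj, le_trans (hse j hj) (le_of_lt hej)⟩
    simp only [hAdef, hBdef]
    rw [hset]
  set F : ℕ → ℝ := fun i => if i = 0 then 0 else r ^ (m - A i) with hFdef
  set G : ℕ → ℝ := fun i => if l < i then 0 else r ^ (B i) with hGdef
  have hF0 : F 0 = 0 := by simp [hFdef]
  have hFpos : ∀ i, i ≠ 0 → F i = r ^ (m - A i) := by
    intro i h
    simp only [hFdef]
    rw [if_neg h]
  have hGle : ∀ i, i ≤ l → G i = r ^ (B i) := by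
    intro i h
    simp only [hGdef]
    rw [if_neg (by omega)]
  have hGgt : ∀ i, l < i → G i = 0 := by
    intro i h
    simp only [hGdef]
    rw [if_pos h]
  refine ⟨fun i => F i - F (i - 1), fun i => G i - G (i + 1), ?_, ?_, ?_, ?_, ?_⟩
  · intro i hi
    have hi' := Finset.mem_Icc.mp hi
    show (0:ℝ) ≤ F i - F (i - 1)
    rw [hFpos i (by omega), sub_nonneg]
    rcases Nat.eq_or_lt_of_le hi'.1 with h | h
    · rw [(by omega : i - 1 = 0), hF0]
      positivity
    · rw [hFpos (i - 1) (by omega)]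
      exact pow_le_pow_of_le_one (le_of_lt hr0) hr1
        (by have := hAmono (i - 1) i (by omega); omega)
  · rw [tele_up F l, hF0, hFpos l (by omega), hAl, sub_zero, Nat.sub_self, pow_zero]
  · intro i hi
    have hi' := Finset.mem_Icc.mp hi
    show (0:ℝ) ≤ G i - G (i + 1)
    rw [hGle i (by omega), sub_nonneg]
    rcases Nat.eq_or_lt_of_le hi'.2 with h | h
    · rw [hGgt (i + 1) (by omega)]
      positivity
    · rw [hGle (i + 1) (by omega)]
      exact pow_le_pow_of_le_one (le_of_lt hr0) hr1 (hBmono i (i + 1) (by omega))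
  · rw [tele_down G 1 l (by omega), hGgt (l + 1) (by omega), hGle 1 hl, hB1, sub_zero,
      pow_zero]
  · intro i hi
    have hi' := Finset.mem_Icc.mp hi
    rw [tele_up F i, tele_down G i l (by omega), hF0, hGgt (l + 1) (by omega),
      hFpos i (by omega), hGle i (by omega), sub_zero, sub_zero, ← pow_add]
    have hane : a ≠ 0 := ne_of_gt ha
    have hεne : ε ≠ 0 := ne_of_gt hε
    have hru : (a / ε) * r = 1 := by
      rw [hrdef]
      field_simp
    by_cases hblk : ∃ j ∈ Finset.Icc 1 m, s j ≤ i ∧ i ≤ e j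
    · rw [if_pos hblk]
      have hAB := hcount1 i hblk
      have hABm : A i ≤ m := hAle i
      obtain ⟨n, rfl⟩ : ∃ n, m = n + 1 := ⟨m - 1, by omega⟩
      have hexp : n + 1 - A i + B i = n := by omega
      rw [hexp]
      have hstep : ε * (a / ε) ^ (n + 1) * r ^ n = ε * (a / ε) * ((a / ε) * r) ^ n := by
        rw [mul_pow, pow_succ]
        ring
      rw [hstep, hru, one_pow, mul_one, mul_comm, div_mul_cancel₀ a hεne]
    · rw [if_neg hblk]
      have hAB := hcount2 i hblk
      have hABm : A i ≤ m := hAle i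
      have hexp : m - A i + B i = m := by omega
      rw [hexp]
      have hstep : ε * (a / ε) ^ m * r ^ m = ε * ((a / ε) * r) ^ m := by
        rw [mul_pow]
        ring
      rw [hstep, hru, one_pow, mul_one]
end
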